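/- Lower containment of Hölder space in interpolation space, order 0: if u ∈ (C, C^{1,0}_B)_{α,∞} for some 0 < α < 1, then u ∈ C^{0,α}_B and ‖u‖_{C^{0,α}_B} ≤ C ‖u‖_{(C, C^{1,0}_B)_{α,∞}}; in particular, for every z, δ ≠ 0 and i ≤ p₀: |u(e^{δ∂_{x_i}}z) − u(z)| ≤ 2|δ|^α ‖u‖_{(C,C^{1,0}_B)_{α,∞}} and |u(e^{δY}z) − u(z)| ≤ 2|δ|^{α/2} ‖u‖_{(C,C^{1,0}_B)_{α,∞}}. -/

import Mathlib

open ENNReal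

/-- Functions on `ℝ^{d+1} = ℝ × ℝ^d`. -/
abbrev KFun (d : ℕ) := ℝ × (Fin d → ℝ) → ℝ

/-- The flow of `∂_{x_i}`: `e^{δ∂_{x_i}}(t,x) = (t, x + δ e_i)`. -/
def flowX {d : ℕ} (i : Fin d) (δ : ℝ) (z : ℝ × (Fin d → ℝ)) : ℝ × (Fin d → ℝ) :=
  (z.1, z.2 + δ • (Pi.single i 1 : Fin d → ℝ))

/-- The flow of `Y`: `e^{δY}(t,x) = (t+δ, e^{δB}x)`. -/
noncomputable def flowY {d : ℕ} (B : Matrix (Fin d) (Fin d) ℝ)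
    (δ : ℝ) (z : ℝ × (Fin d → ℝ)) : ℝ × (Fin d → ℝ) :=
  (z.1 + δ, (NormedSpace.exp (δ • B)).mulVec z.2)

/-- Supremum norm, valued in `ℝ≥0∞`. -/
noncomputable def eSup {d : ℕ} (u : KFun d) : ℝ≥0∞ :=
  ⨆ z, (‖u z‖₊ : ℝ≥0∞)

/-- Hölder seminorm of exponent `β` along the flow `Φ`:
`sup_{z, δ ≠ 0} |u(Φ_δ z) − u(z)| / |δ|^β`. -/
noncomputable def eHol {d : ℕ} (Φ : ℝ → ℝ × (Fin d → ℝ) → ℝ × (Fin d → ℝ))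
    (β : ℝ) (u : KFun d) : ℝ≥0∞ :=
  ⨆ z, ⨆ δ : ℝ,
    if δ = 0 then 0 else (‖u (Φ δ z) - u z‖₊ : ℝ≥0∞) / ENNReal.ofReal (|δ| ^ β)

/-- `u ∈ C`: bounded and continuous. -/
def MemC {d : ℕ} (u : KFun d) : Prop := Continuous u ∧ eSup u < ⊤

/-- The derivative `∂_{x_i} u`. -/
noncomputable def derX {d : ℕ} (i : Fin d) (u : KFun d) : KFun d :=
  fun z => deriv (fun s => u (flowX i s z)) 0

/-- `u ∈ C^{1,0}_B`: `u ∈ C`, `[u]_{C^{1/2}_Y} < ∞`, and `∂_{x_i} u ∈ C` for `i ≤ p₀`. -/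
def MemC10 {d : ℕ} (p₀ : ℕ) (B : Matrix (Fin d) (Fin d) ℝ) (u : KFun d) : Prop :=
  MemC u ∧ eHol (flowY B) ((1 : ℝ) / 2) u < ⊤ ∧
    ∀ i : Fin d, (i : ℕ) < p₀ →
      (∀ z, DifferentiableAt ℝ (fun s => u (flowX i s z)) 0) ∧ MemC (derX i u)

/-- The `C^{1,0}_B` norm: `|u|_∞ + [u]_{C^{1/2}_Y} + Σ_{i ≤ p₀} |∂_{x_i}u|_∞`. -/
noncomputable def normC10 {d : ℕ} (p₀ : ℕ) (B : Matrix (Fin d) (Fin d) ℝ)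
    (u : KFun d) : ℝ≥0∞ :=
  eSup u + eHol (flowY B) ((1 : ℝ) / 2) u +
    ∑ i : Fin d, if (i : ℕ) < p₀ then eSup (derX i u) else 0

/-- The K-functional `K(λ, u; C, C^{1,0}_B)`. -/
noncomputable def K10 {d : ℕ} (p₀ : ℕ) (B : Matrix (Fin d) (Fin d) ℝ)
    (lam : ℝ) (u : KFun d) : ℝ≥0∞ :=
  ⨅ (b : KFun d) (_ : MemC10 p₀ B b) (_ : MemC (u - b)),
    eSup (u - b) + ENNReal.ofReal lam * normC10 p₀ B b


/-- The `C^{0,α}_B` norm: `|u|_∞ + [u]_{C^{α/2}_Y} + Σ_{i ≤ p₀} [u]_{C^α_{∂_{x_i}}}`. -/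
noncomputable def norm0a {d : ℕ} (p₀ : ℕ) (B : Matrix (Fin d) (Fin d) ℝ)
    (α : ℝ) (u : KFun d) : ℝ≥0∞ :=
  eSup u + eHol (flowY B) (α / 2) u +
    ∑ i : Fin d, if (i : ℕ) < p₀ then eHol (flowX i) α u else 0

/-- The norm of the real interpolation space `(C, C^{1,0}_B)_{α,∞}`:
`sup_{λ>0} λ^{-α} K(λ, u; C, C^{1,0}_B)`. -/
noncomputable def interpNorm {d : ℕ} (p₀ : ℕ) (B : Matrix (Fin d) (Fin d) ℝ)
    (α : ℝ) (u : KFun d) : ℝ≥0∞ :=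
  ⨆ (lam : ℝ), ⨆ (_ : 0 < lam), ENNReal.ofReal (lam ^ (-α)) * K10 p₀ B lam u

/-!
For any splitting `u = (u - b) + b` with `b ∈ C^{1,0}_B`, an increment of `u` along a step of
intrinsic size `λ` (`λ = |δ|` along `∂_{x_i}`, `λ = |δ|^{1/2}` along `Y`) is at most
`2 |u - b|_∞ + λ ‖b‖_{C^{1,0}_B}`: twice the sup norm of `u - b`, plus the mean value theorem for `b`
along `∂_{x_i}`, respectively the `C^{1/2}_Y` seminorm of `b`. Taking the infimum over `b` bounds the
increment by `2 K(λ, u) ≤ 2 λ^α ‖u‖_{(C, C^{1,0}_B)_{α,∞}}`.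
-/

namespace KolmogorovHolder

variable {d : ℕ}

theorem coe_nnnorm_le_eSup (f : KFun d) (z : ℝ × (Fin d → ℝ)) :
    (‖f z‖₊ : ℝ≥0∞) ≤ eSup f :=
  le_iSup (fun z => (‖f z‖₊ : ℝ≥0∞)) z

theorem eSup_le_eSup_sub_add (u b : KFun d) : eSup u ≤ eSup (u - b) + eSup b :=
  iSup_le fun z => calc
    (‖u z‖₊ : ℝ≥0∞) = ‖(u - b) z + b z‖₊ := by simp
    _ ≤ ‖(u - b) z‖₊ + ‖b z‖₊ := by exact_mod_cast nnnorm_add_le _ _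
    _ ≤ eSup (u - b) + eSup b := add_le_add (coe_nnnorm_le_eSup _ _) (coe_nnnorm_le_eSup _ _)

theorem coe_nnnorm_sub_le_two_mul_eSup_sub_add (u b : KFun d) (w z : ℝ × (Fin d → ℝ)) :
    (‖u w - u z‖₊ : ℝ≥0∞) ≤ 2 * eSup (u - b) + ‖b w - b z‖₊ := calc
  (‖u w - u z‖₊ : ℝ≥0∞) = ‖((u - b) w - (u - b) z) + (b w - b z)‖₊ := by
      congr 2; simp only [Pi.sub_apply]; ring
  _ ≤ ‖(u - b) w‖₊ + ‖(u - b) z‖₊ + ‖b w - b z‖₊ := by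
      exact_mod_cast (nnnorm_add_le _ _).trans (add_le_add_left (nnnorm_sub_le _ _) _)
  _ ≤ eSup (u - b) + eSup (u - b) + ‖b w - b z‖₊ := by
      gcongr <;> exact coe_nnnorm_le_eSup _ _
  _ = 2 * eSup (u - b) + ‖b w - b z‖₊ := by rw [two_mul]

theorem coe_nnnorm_sub_le_eHol_mul (Φ : ℝ → ℝ × (Fin d → ℝ) → ℝ × (Fin d → ℝ)) (β : ℝ)
    (u : KFun d) (z : ℝ × (Fin d → ℝ)) {δ : ℝ} (hδ : δ ≠ 0) :
    (‖u (Φ δ z) - u z‖₊ : ℝ≥0∞) ≤ ENNReal.ofReal (|δ| ^ β) * eHol Φ β u := by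
  have hterm : (‖u (Φ δ z) - u z‖₊ : ℝ≥0∞) / ENNReal.ofReal (|δ| ^ β) ≤ eHol Φ β u := by
    have h := le_iSup₂ (f := fun (z : ℝ × (Fin d → ℝ)) (δ : ℝ) => if δ = 0 then 0 else
      (‖u (Φ δ z) - u z‖₊ : ℝ≥0∞) / ENNReal.ofReal (|δ| ^ β)) z δ
    rwa [if_neg hδ] at h
  have hpos : ENNReal.ofReal (|δ| ^ β) ≠ 0 :=
    (ENNReal.ofReal_pos.2 (Real.rpow_pos_of_pos (abs_pos.2 hδ) β)).ne'
  rw [mul_comm]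
  exact (ENNReal.div_le_iff_le_mul (Or.inl hpos) (Or.inl ENNReal.ofReal_ne_top)).1 hterm

theorem eHol_le_of_forall_le (Φ : ℝ → ℝ × (Fin d → ℝ) → ℝ × (Fin d → ℝ)) (β : ℝ)
    (u : KFun d) {M : ℝ≥0∞}
    (h : ∀ z δ, δ ≠ 0 → (‖u (Φ δ z) - u z‖₊ : ℝ≥0∞) ≤ ENNReal.ofReal (|δ| ^ β) * M) :
    eHol Φ β u ≤ M :=
  iSup₂_le fun z δ => by
    split_ifs with hδ
    · exact zero_le
    · exact ENNReal.div_le_of_le_mul' (h z δ hδ)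

section NormC10

variable (p₀ : ℕ) (B : Matrix (Fin d) (Fin d) ℝ) (b : KFun d)

theorem eSup_le_normC10 : eSup b ≤ normC10 p₀ B b :=
  le_self_add.trans le_self_add

theorem eHol_flowY_le_normC10 : eHol (flowY B) ((1 : ℝ) / 2) b ≤ normC10 p₀ B b :=
  le_add_self.trans le_self_add

theorem eSup_derX_le_normC10 {i : Fin d} (hi : (i : ℕ) < p₀) :
    eSup (derX i b) ≤ normC10 p₀ B b := calc
  eSup (derX i b) = if (i : ℕ) < p₀ then eSup (derX i b) else 0 := (if_pos hi).symm
  _ ≤ ∑ j : Fin d, if (j : ℕ) < p₀ then eSup (derX j b) else 0 :=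
      Finset.single_le_sum (f := fun j : Fin d => if (j : ℕ) < p₀ then eSup (derX j b) else 0)
        (fun _ _ => zero_le) (Finset.mem_univ i)
  _ ≤ normC10 p₀ B b := le_add_self

end NormC10

theorem flowX_zero (i : Fin d) (z : ℝ × (Fin d → ℝ)) : flowX i 0 z = z := by
  simp [flowX]

theorem flowX_add (i : Fin d) (s t : ℝ) (z : ℝ × (Fin d → ℝ)) :
    flowX i (s + t) z = flowX i t (flowX i s z) := by
  simp [flowX, add_smul, add_assoc]

theorem hasDerivAt_comp_flowX {i : Fin d} {b : KFun d}
    (hb : ∀ w, DifferentiableAt ℝ (fun s => b (flowX i s w)) 0) (z : ℝ × (Fin d → ℝ)) (s : ℝ) :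
    HasDerivAt (fun t => b (flowX i t z)) (derX i b (flowX i s z)) s := by
  have h0 : HasDerivAt (fun t => b (flowX i t (flowX i s z))) (derX i b (flowX i s z)) 0 :=
    (hb (flowX i s z)).hasDerivAt
  simp_rw [← flowX_add] at h0
  have h1 := HasDerivAt.comp_sub_const s s (by rwa [sub_self])
  simpa only [add_sub_cancel] using h1

theorem norm_flowX_sub_le {i : Fin d} {b : KFun d}
    (hb : ∀ w, DifferentiableAt ℝ (fun s => b (flowX i s w)) 0)
    {C : ℝ} (hC : ∀ w, ‖derX i b w‖ ≤ C) (z : ℝ × (Fin d → ℝ)) (δ : ℝ) :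
    ‖b (flowX i δ z) - b z‖ ≤ C * |δ| := by
  simpa [flowX_zero, Real.norm_eq_abs] using
    convex_univ.norm_image_sub_le_of_norm_hasDerivWithin_le
      (fun s _ => (hasDerivAt_comp_flowX hb z s).hasDerivWithinAt) (fun s _ => hC _)
      (Set.mem_univ 0) (Set.mem_univ δ)

theorem coe_nnnorm_flowX_sub_le {p₀ : ℕ} {B : Matrix (Fin d) (Fin d) ℝ} {b : KFun d}
    (hb : MemC10 p₀ B b) {i : Fin d} (hi : (i : ℕ) < p₀) (z : ℝ × (Fin d → ℝ)) (δ : ℝ) :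
    (‖b (flowX i δ z) - b z‖₊ : ℝ≥0∞) ≤ ENNReal.ofReal |δ| * normC10 p₀ B b := by
  obtain ⟨hdiff, -, hfin⟩ := hb.2.2 i hi
  have hC : ∀ w, ‖derX i b w‖ ≤ (eSup (derX i b)).toReal := fun w => by
    simpa using ENNReal.toReal_mono hfin.ne (coe_nnnorm_le_eSup (derX i b) w)
  calc (‖b (flowX i δ z) - b z‖₊ : ℝ≥0∞)
      = ENNReal.ofReal ‖b (flowX i δ z) - b z‖ := (ofReal_norm _).symm
    _ ≤ ENNReal.ofReal ((eSup (derX i b)).toReal * |δ|) :=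
        ENNReal.ofReal_le_ofReal (norm_flowX_sub_le hdiff hC z δ)
    _ = ENNReal.ofReal |δ| * eSup (derX i b) := by
        rw [ENNReal.ofReal_mul ENNReal.toReal_nonneg, ENNReal.ofReal_toReal hfin.ne, mul_comm]
    _ ≤ ENNReal.ofReal |δ| * normC10 p₀ B b := by
        gcongr; exact eSup_derX_le_normC10 p₀ B b hi

section Interpolation

variable {p₀ : ℕ} {B : Matrix (Fin d) (Fin d) ℝ} {α : ℝ}

theorem K10_le_rpow_mul_interpNorm (u : KFun d) {lam : ℝ} (hlam : 0 < lam) :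
    K10 p₀ B lam u ≤ ENNReal.ofReal (lam ^ α) * interpNorm p₀ B α u := by
  have hK : ENNReal.ofReal (lam ^ (-α)) * K10 p₀ B lam u ≤ interpNorm p₀ B α u :=
    le_iSup₂ (f := fun (lam : ℝ) (_ : 0 < lam) =>
      ENNReal.ofReal (lam ^ (-α)) * K10 p₀ B lam u) lam hlam
  have hinv : ENNReal.ofReal (lam ^ α) * ENNReal.ofReal (lam ^ (-α)) = 1 := by
    rw [← ENNReal.ofReal_mul (Real.rpow_nonneg hlam.le _), ← Real.rpow_add hlam]
    simp
  calc K10 p₀ B lam u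
      = ENNReal.ofReal (lam ^ α) * (ENNReal.ofReal (lam ^ (-α)) * K10 p₀ B lam u) := by
        rw [← mul_assoc, hinv, one_mul]
    _ ≤ ENNReal.ofReal (lam ^ α) * interpNorm p₀ B α u := by gcongr

theorem eSup_le_interpNorm (u : KFun d) : eSup u ≤ interpNorm p₀ B α u := by
  have hK : eSup u ≤ K10 p₀ B 1 u :=
    le_iInf₂ fun b hb => le_iInf fun _ => by
      simpa using (eSup_le_eSup_sub_add u b).trans (add_le_add le_rfl (eSup_le_normC10 p₀ B b))
  simpa using hK.trans (K10_le_rpow_mul_interpNorm (α := α) u one_pos)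

theorem coe_nnnorm_sub_le_of_forall_memC10 (u : KFun d) (w z : ℝ × (Fin d → ℝ))
    {lam : ℝ} (hlam : 0 < lam)
    (h : ∀ b, MemC10 p₀ B b → (‖b w - b z‖₊ : ℝ≥0∞) ≤ ENNReal.ofReal lam * normC10 p₀ B b) :
    (‖u w - u z‖₊ : ℝ≥0∞) ≤ 2 * ENNReal.ofReal (lam ^ α) * interpNorm p₀ B α u := by
  have hK : (‖u w - u z‖₊ : ℝ≥0∞) / 2 ≤ K10 p₀ B lam u :=
    le_iInf₂ fun b hb => le_iInf fun _ => ENNReal.div_le_of_le_mul' <| calc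
      (‖u w - u z‖₊ : ℝ≥0∞) ≤ 2 * eSup (u - b) + ‖b w - b z‖₊ :=
          coe_nnnorm_sub_le_two_mul_eSup_sub_add u b w z
      _ ≤ 2 * eSup (u - b) + 2 * (ENNReal.ofReal lam * normC10 p₀ B b) := by
          gcongr; exact (h b hb).trans (le_add_self.trans_eq (two_mul _).symm)
      _ = 2 * (eSup (u - b) + ENNReal.ofReal lam * normC10 p₀ B b) := by rw [mul_add]
  calc (‖u w - u z‖₊ : ℝ≥0∞)
      = 2 * ((‖u w - u z‖₊ : ℝ≥0∞) / 2) := (ENNReal.mul_div_cancel' (by norm_num) (by norm_num)).symm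
    _ ≤ 2 * (ENNReal.ofReal (lam ^ α) * interpNorm p₀ B α u) :=
        mul_le_mul_right (hK.trans (K10_le_rpow_mul_interpNorm u hlam)) _
    _ = 2 * ENNReal.ofReal (lam ^ α) * interpNorm p₀ B α u := (mul_assoc _ _ _).symm

end Interpolation

end KolmogorovHolder

open KolmogorovHolder in
theorem stmt17_general {d : ℕ} (p₀ : ℕ) (B : Matrix (Fin d) (Fin d) ℝ)
    (α : ℝ) (u : KFun d) :
    (∀ (i : Fin d), (i : ℕ) < p₀ → ∀ (z : ℝ × (Fin d → ℝ)) (δ : ℝ), δ ≠ 0 →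
      (‖u (flowX i δ z) - u z‖₊ : ℝ≥0∞)
        ≤ 2 * ENNReal.ofReal (|δ| ^ α) * interpNorm p₀ B α u) ∧
    (∀ (z : ℝ × (Fin d → ℝ)) (δ : ℝ), δ ≠ 0 →
      (‖u (flowY B δ z) - u z‖₊ : ℝ≥0∞)
        ≤ 2 * ENNReal.ofReal (|δ| ^ (α / 2)) * interpNorm p₀ B α u) ∧
    (∃ C : ℝ, 0 < C ∧ norm0a p₀ B α u ≤ ENNReal.ofReal C * interpNorm p₀ B α u) := by
  set I := interpNorm p₀ B α u
  have hX : ∀ (i : Fin d), (i : ℕ) < p₀ → ∀ z δ, δ ≠ 0 →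
      (‖u (flowX i δ z) - u z‖₊ : ℝ≥0∞) ≤ 2 * ENNReal.ofReal (|δ| ^ α) * I :=
    fun i hi z δ hδ => coe_nnnorm_sub_le_of_forall_memC10 u _ z (abs_pos.2 hδ)
      fun _ hb => coe_nnnorm_flowX_sub_le hb hi z δ
  have hY : ∀ z δ, δ ≠ 0 →
      (‖u (flowY B δ z) - u z‖₊ : ℝ≥0∞) ≤ 2 * ENNReal.ofReal (|δ| ^ (α / 2)) * I := by
    intro z δ hδ
    rw [show α / 2 = 1 / 2 * α by ring, Real.rpow_mul (abs_nonneg δ)]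
    exact coe_nnnorm_sub_le_of_forall_memC10 u _ z (Real.rpow_pos_of_pos (abs_pos.2 hδ) _)
      fun b _ => (coe_nnnorm_sub_le_eHol_mul _ _ b z hδ).trans (by
        gcongr; exact eHol_flowY_le_normC10 p₀ B b)
  have hHol : ∀ Φ β, (∀ z δ, δ ≠ 0 → (‖u (Φ δ z) - u z‖₊ : ℝ≥0∞)
      ≤ 2 * ENNReal.ofReal (|δ| ^ β) * I) → eHol Φ β u ≤ 2 * I :=
    fun Φ β h => eHol_le_of_forall_le Φ β u fun z δ hδ => (h z δ hδ).trans_eq (by ring)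
  have hsum : (∑ i : Fin d, if (i : ℕ) < p₀ then eHol (flowX i) α u else 0) ≤ d * (2 * I) := by
    simpa using Finset.sum_le_card_nsmul Finset.univ
      (fun i : Fin d => if (i : ℕ) < p₀ then eHol (flowX i) α u else 0) (2 * I) fun i _ => by
      split_ifs with hi
      exacts [hHol _ _ (hX i hi), zero_le]
  refine ⟨hX, hY, 3 + 2 * d, by positivity, ?_⟩
  calc norm0a p₀ B α u ≤ I + 2 * I + d * (2 * I) :=
        add_le_add (add_le_add (eSup_le_interpNorm u) (hHol _ _ hY)) hsum
    _ = ENNReal.ofReal (3 + 2 * d) * I := by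
        rw [ENNReal.ofReal_add (by norm_num) (by positivity), ENNReal.ofReal_mul (by norm_num)]
        norm_num; ring

/-- If `u ∈ (C, C^{1,0}_B)_{α,∞}` for `0 < α < 1`, then `u ∈ C^{0,α}_B` with
`‖u‖_{C^{0,α}_B} ≤ C ‖u‖_{(C,C^{1,0}_B)_{α,∞}}`; in particular for every `z`, `δ ≠ 0`
and `i ≤ p₀`: `|u(e^{δ∂_{x_i}}z) − u(z)| ≤ 2|δ|^α ‖u‖_{(C,C^{1,0}_B)_{α,∞}}` and
`|u(e^{δY}z) − u(z)| ≤ 2|δ|^{α/2} ‖u‖_{(C,C^{1,0}_B)_{α,∞}}`. -/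
theorem stmt17 {d : ℕ} (p₀ : ℕ) (B : Matrix (Fin d) (Fin d) ℝ)
    (α : ℝ) (hα0 : 0 < α) (hα1 : α < 1)
    (u : KFun d) (hu : MemC u) (hfin : interpNorm p₀ B α u < ⊤) :
    (∀ (i : Fin d), (i : ℕ) < p₀ → ∀ (z : ℝ × (Fin d → ℝ)) (δ : ℝ), δ ≠ 0 →
      (‖u (flowX i δ z) - u z‖₊ : ℝ≥0∞)
        ≤ 2 * ENNReal.ofReal (|δ| ^ α) * interpNorm p₀ B α u) ∧
    (∀ (z : ℝ × (Fin d → ℝ)) (δ : ℝ), δ ≠ 0 →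
      (‖u (flowY B δ z) - u z‖₊ : ℝ≥0∞)
        ≤ 2 * ENNReal.ofReal (|δ| ^ (α / 2)) * interpNorm p₀ B α u) ∧
    (∃ C : ℝ, 0 < C ∧ norm0a p₀ B α u ≤ ENNReal.ofReal C * interpNorm p₀ B α u) :=
  stmt17_general p₀ B α u
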